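/- arXiv:2307.07267 — 3 statements merged into one kernel-verified Lean document; each statement's English description precedes it below -/
import Mathlib

section
/- Let n, σ, m be positive integers with σ ≤ n-1 and n-1 ≤ m ≤ nσ. The cardinality of the set of pairs (O, I), where O is an n×σ binary matrix with m ones and no all-zero column, and I ∈ {0,1}^m has exactly n-1 ones and satisfies I_{1+∑_{k=1}^{j-1}‖O_k‖} = 1 for all j ∈ [σ], equals C(m-σ, n-σ-1) · ∑_{j=0}^{σ} (-1)^j C(σ,j) C(n(σ-j), m). -/
/-!
Count the pairs by summing over `O`. When `O` has `m` ones and no zero column, the forced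
positions `∑_{k<j} ‖O_k‖` are prefix sums of positive column weights, hence `σ` distinct indices
below `m`; the admissible `I` are the `(n-1)`-sets containing them, so each such `O` contributes
`C(m-σ, n-σ-1)`. The matrices with `m` ones and no zero column are counted by inclusion–exclusion
over the set `t` of columns forced to vanish: the `m` ones then fill `n (σ - |t|)` free cells.
-/

open Finset

section BoolFunctions

variable {α : Type*} [Fintype α] [DecidableEq α]

def boolFunEquivFinset : (α → Bool) ≃ Finset α where
  toFun f := {a | f a = true}
  invFun s a := decide (a ∈ s)
  left_inv f := by funext a; simp
  right_inv s := by ext a; simp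

lemma card_filter_boolFun_eq_card_filter_finset {P : (α → Bool) → Prop} {Q : Finset α → Prop}
    [DecidablePred P] [DecidablePred Q] (h : ∀ f, P f ↔ Q {a | f a = true}) :
    #{f | P f} = #{s | Q s} :=
  card_equiv boolFunEquivFinset fun f => by simp only [mem_filter, mem_univ, true_and]; exact h f

lemma card_filter_card_eq_and_superset {S : Finset α} {t : ℕ} (hS : #S ≤ t) :
    #{s : Finset α | #s = t ∧ S ⊆ s} = (Fintype.card α - #S).choose (t - #S) := by
  rw [← card_compl, ← card_powersetCard]
  refine card_nbij' (· \ S) (· ∪ S) ?_ ?_ ?_ ?_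
  · intro s hs
    simp only [mem_coe, mem_filter, mem_univ, true_and] at hs
    simp [mem_powersetCard, card_sdiff_of_subset hs.2, hs.1, subset_iff]
  · intro u hu
    simp only [mem_coe, mem_powersetCard, subset_compl_iff_disjoint_right] at hu
    simp [card_union_of_disjoint hu.1, hu.2, Nat.sub_add_cancel hS]
  · intro s hs
    simp only [mem_coe, mem_filter, mem_univ, true_and] at hs
    exact sdiff_union_of_subset hs.2
  · intro u hu
    simp only [mem_coe, mem_powersetCard, subset_compl_iff_disjoint_right] at hu
    exact union_sdiff_cancel_right hu.1

lemma card_filter_card_eq_and_subset (T : Finset α) (t : ℕ) :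
    #{s : Finset α | #s = t ∧ s ⊆ T} = (#T).choose t := by
  rw [← card_powersetCard]
  congr 1
  ext s
  simp [mem_powersetCard, and_comm]

lemma card_boolFun_card_eq_forall_true {S : Finset α} {t : ℕ} (hS : #S ≤ t) :
    #{f : α → Bool | #{a | f a = true} = t ∧ ∀ a ∈ S, f a = true} =
      (Fintype.card α - #S).choose (t - #S) := by
  rw [← card_filter_card_eq_and_superset hS]
  exact card_filter_boolFun_eq_card_filter_finset fun f => by simp [subset_iff]

end BoolFunctions

lemma card_boolMatrix_eq_sum_card_col {ρ ι : Type*} [Fintype ρ] [Fintype ι] (O : ρ → ι → Bool) :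
    #{p : ρ × ι | O p.1 p.2 = true} = ∑ j, #{r | O r j = true} := by
  rw [card_filter, Fintype.sum_prod_type, sum_comm]
  simp only [card_filter]

section Matrices

variable {ρ ι : Type*} [Fintype ρ] [Fintype ι] [DecidableEq ρ] [DecidableEq ι]

lemma card_boolMatrix_weight_eq_and_zero_cols (m : ℕ) (t : Finset ι) :
    #{O : ρ → ι → Bool | #{p : ρ × ι | O p.1 p.2 = true} = m ∧ ∀ j ∈ t, ∀ r, O r j = false} =
      (Fintype.card ρ * (Fintype.card ι - #t)).choose m := by
  have hT : #((univ : Finset ρ) ×ˢ tᶜ) = Fintype.card ρ * (Fintype.card ι - #t) := by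
    rw [card_product, card_univ, card_compl]
  rw [← hT, ← card_filter_card_eq_and_subset,
    ← card_filter_boolFun_eq_card_filter_finset (P := fun f : ρ × ι → Bool =>
      #{p | f p = true} = m ∧ ∀ j ∈ t, ∀ r, f (r, j) = false) fun f => ?_]
  · exact card_equiv (Equiv.curry ρ ι Bool).symm fun O => by simp [Function.uncurry_def]
  · refine and_congr_right fun _ => ⟨fun h p hp => ?_, fun h j hj r => ?_⟩
    · simp only [mem_filter, mem_univ, true_and] at hp
      simp only [mem_product, mem_univ, mem_compl, true_and]
      exact fun hj => absurd (h _ hj p.1) (by simpa using hp)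
    · by_contra hr
      simpa [hj] using h (mem_filter.2 ⟨mem_univ (r, j), by simpa using hr⟩)

lemma card_boolMatrix_weight_eq_and_no_zero_col (m : ℕ) :
    (#{O : ρ → ι → Bool | #{p : ρ × ι | O p.1 p.2 = true} = m ∧ ∀ j, ∃ r, O r j = true} : ℤ) =
      ∑ j ∈ range (Fintype.card ι + 1), (-1 : ℤ) ^ j * (Fintype.card ι).choose j *
        (Fintype.card ρ * (Fintype.card ι - j)).choose m := by
  let zeroCol (j : ι) : Finset (ρ → ι → Bool) := {O | ∀ r, O r j = false}
  let hasWeight (O : ρ → ι → Bool) : ℤ := if #{p : ρ × ι | O p.1 p.2 = true} = m then 1 else 0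
  have sum_hasWeight (s : Finset (ρ → ι → Bool)) (P : (ρ → ι → Bool) → Prop) [DecidablePred P]
      (hs : ∀ O, O ∈ s ↔ P O) :
      ∑ O ∈ s, hasWeight O = #{O : ρ → ι → Bool | #{p : ρ × ι | O p.1 p.2 = true} = m ∧ P O} := by
    rw [sum_boole, filter_congr_decidable]
    congr 2
    ext O
    simp [hs, and_comm]
  calc _ = ∑ O ∈ univ.inf (fun j => (zeroCol j)ᶜ), hasWeight O :=
        (sum_hasWeight _ _ fun O => by simp [zeroCol, mem_inf]).symm
    _ = ∑ t ∈ univ.powerset, (-1) ^ #t • ∑ O ∈ t.inf zeroCol, hasWeight O :=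
        inclusion_exclusion_sum_inf_compl _ _ _
    _ = ∑ t ∈ (univ : Finset ι).powerset,
          (-1 : ℤ) ^ #t * (Fintype.card ρ * (Fintype.card ι - #t)).choose m := by
        refine sum_congr rfl fun t _ => ?_
        rw [sum_hasWeight _ (fun O => ∀ j ∈ t, ∀ r, O r j = false) fun O => by
          simp [zeroCol, mem_inf], card_boolMatrix_weight_eq_and_zero_cols, smul_eq_mul]
    _ = _ := by
        rw [sum_powerset_apply_card
          (fun k => (-1 : ℤ) ^ k * (Fintype.card ρ * (Fintype.card ι - k)).choose m), card_univ]
        exact sum_congr rfl fun k _ => by rw [nsmul_eq_mul]; ring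

end Matrices

section PrefixSums

variable {ι M : Type*} [Fintype ι] [LinearOrder ι] [AddCommMonoid M] [PartialOrder M]
  [IsOrderedCancelAddMonoid M] {w : ι → M}

lemma strictMono_sum_filter_lt (hw : ∀ i, 0 < w i) :
    StrictMono fun j => ∑ k ∈ {k | k < j}, w k := fun i j hij =>
  sum_lt_sum_of_subset (fun k hk => by simpa using (mem_filter.1 hk).2.trans hij)
    (by simpa using hij) (by simp) (hw i) fun k _ _ => (hw k).le

lemma sum_filter_lt_lt_sum (hw : ∀ i, 0 < w i) (j : ι) : ∑ k ∈ {k | k < j}, w k < ∑ k, w k :=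
  sum_lt_sum_of_subset (subset_univ _) (mem_univ j) (by simp) (hw j) fun k _ _ => (hw k).le

end PrefixSums

lemma card_boolFun_forced_at_sum_filter_lt {ι : Type*} [Fintype ι] [LinearOrder ι] {w : ι → ℕ}
    {m t : ℕ} (hw : ∀ i, 0 < w i) (hsum : ∑ i, w i = m) (ht : Fintype.card ι ≤ t) :
    #{I : Fin m → Bool | #{i | I i = true} = t ∧
        ∀ (j : ι) (i : Fin m), (i : ℕ) = ∑ k ∈ {k | k < j}, w k → I i = true} =
      (m - Fintype.card ι).choose (t - Fintype.card ι) := by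
  let start : ι ↪ Fin m :=
    ⟨fun j => ⟨∑ k ∈ {k | k < j}, w k, hsum ▸ sum_filter_lt_lt_sum hw j⟩,
      fun i j hij => (strictMono_sum_filter_lt hw).injective (Fin.val_eq_of_eq hij)⟩
  have hstart : #(univ.map start) = Fintype.card ι := by rw [card_map, card_univ]
  have key := card_boolFun_card_eq_forall_true (t := t) (hstart ▸ ht)
  rw [hstart, Fintype.card_fin] at key
  rw [← key]
  congr 1
  ext I
  simp only [mem_filter, mem_univ, true_and, mem_map, forall_exists_index]
  exact and_congr_right fun _ =>
    ⟨fun h i j hj => h j i (congrArg Fin.val hj).symm, fun h j i hi => h i j (Fin.ext hi.symm)⟩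

lemma card_boolFun_forced_at_col_starts {ρ ι : Type*} [Fintype ρ] [Fintype ι] [LinearOrder ι]
    {m t : ℕ} (O : ρ → ι → Bool) (hweight : #{p : ρ × ι | O p.1 p.2 = true} = m)
    (hcol : ∀ j, ∃ r, O r j = true) (ht : Fintype.card ι ≤ t) :
    #{I : Fin m → Bool | #{i | I i = true} = t ∧
        ∀ (j : ι) (i : Fin m), (i : ℕ) = ∑ k ∈ {k | k < j}, #{r | O r k = true} → I i = true} =
      (m - Fintype.card ι).choose (t - Fintype.card ι) :=
  card_boolFun_forced_at_sum_filter_lt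
    (fun j => by simpa [card_pos, filter_nonempty_iff] using hcol j)
    ((card_boolMatrix_eq_sum_card_col O).symm.trans hweight) ht

lemma card_filter_and_of_card_fiber {α β : Type*} [Fintype α] [Fintype β] {P : α → Prop}
    {Q : α → β → Prop} [DecidablePred P] [∀ a, DecidablePred (Q a)] {c : ℕ}
    (hc : ∀ a, P a → #{b | Q a b} = c) :
    #{x : α × β | P x.1 ∧ Q x.1 x.2} = #{a | P a} * c := by
  calc #{x : α × β | P x.1 ∧ Q x.1 x.2}
      = ∑ a ∈ {a | P a}, #{b | Q a b} := by
        rw [card_filter, Fintype.sum_prod_type, sum_filter]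
        refine sum_congr rfl fun a _ => ?_
        by_cases ha : P a
        · simp only [ha, true_and, if_true, card_filter]
        · simp [ha]
    _ = _ := by rw [sum_congr rfl fun a ha => hc a (mem_filter.1 ha).2, sum_const, smul_eq_mul]

theorem stmt_2_general (n σ m : ℕ)
    (hσn : σ ≤ n - 1) :
    ((Finset.univ.filter (fun OI : (Fin n → Fin σ → Bool) × (Fin m → Bool) =>
        -- O has exactly m ones
        (Finset.univ.filter (fun p : Fin n × Fin σ => OI.1 p.1 p.2 = true)).card = m ∧
        -- no all-zero column
        (∀ j : Fin σ, ∃ i : Fin n, OI.1 i j = true) ∧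
        -- I has exactly n - 1 ones
        (Finset.univ.filter (fun i : Fin m => OI.2 i = true)).card = n - 1 ∧
        -- forced ones at positions 1 + ∑_{k<j} ‖O_k‖ (zero-based: ∑_{k<j} ‖O_k‖)
        (∀ j : Fin σ, ∀ i : Fin m,
          (i : ℕ) = ∑ k ∈ Finset.univ.filter (fun k : Fin σ => k < j),
              (Finset.univ.filter (fun r : Fin n => OI.1 r k = true)).card →
          OI.2 i = true))).card : ℤ) =
      ((m - σ).choose (n - σ - 1) : ℤ) *
        ∑ j ∈ Finset.range (σ + 1),
          (-1 : ℤ) ^ j * (σ.choose j) * ((n * (σ - j)).choose m) := by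
  have hfiber := card_filter_and_of_card_fiber
    (P := fun O : Fin n → Fin σ → Bool =>
      #{p : Fin n × Fin σ | O p.1 p.2 = true} = m ∧ ∀ j, ∃ i, O i j = true)
    (Q := fun O (I : Fin m → Bool) => #{i | I i = true} = n - 1 ∧
      ∀ (j : Fin σ) (i : Fin m), (i : ℕ) = ∑ k ∈ {k | k < j}, #{r | O r k = true} → I i = true)
    (c := (m - σ).choose (n - σ - 1)) fun O ⟨hweight, hcol⟩ => by
      have key := card_boolFun_forced_at_col_starts O hweight hcol (by simpa using hσn)
      rw [Fintype.card_fin, Nat.sub_right_comm] at key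
      convert key using 3
  simp only [and_assoc] at hfiber
  have hcount := card_boolMatrix_weight_eq_and_no_zero_col (ρ := Fin n) (ι := Fin σ) m
  simp only [Fintype.card_fin] at hcount
  rw [hfiber, Nat.cast_mul, mul_comm, ← hcount]
  -- the two sides differ only in the `Decidable` instances of the filters over `Fin σ`
  congr

theorem stmt_2 (n σ m : ℕ) (hn : 0 < n) (hσ : 0 < σ) (hm : 0 < m)
    (hσn : σ ≤ n - 1) (hnm : n - 1 ≤ m) (hmn : m ≤ n * σ) :
    ((Finset.univ.filter (fun OI : (Fin n → Fin σ → Bool) × (Fin m → Bool) =>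
        -- O has exactly m ones
        (Finset.univ.filter (fun p : Fin n × Fin σ => OI.1 p.1 p.2 = true)).card = m ∧
        -- no all-zero column
        (∀ j : Fin σ, ∃ i : Fin n, OI.1 i j = true) ∧
        -- I has exactly n - 1 ones
        (Finset.univ.filter (fun i : Fin m => OI.2 i = true)).card = n - 1 ∧
        -- forced ones at positions 1 + ∑_{k<j} ‖O_k‖ (zero-based: ∑_{k<j} ‖O_k‖)
        (∀ j : Fin σ, ∀ i : Fin m,
          (i : ℕ) = ∑ k ∈ Finset.univ.filter (fun k : Fin σ => k < j),
              (Finset.univ.filter (fun r : Fin n => OI.1 r k = true)).card →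
          OI.2 i = true))).card : ℤ) =
      ((m - σ).choose (n - σ - 1) : ℤ) *
        ∑ j ∈ Finset.range (σ + 1),
          (-1 : ℤ) ^ j * (σ.choose j) * ((n * (σ - j)).choose m) :=
  stmt_2_general n σ m hσn
end

section
/- Let n, σ be positive integers with σ ≤ n - 1, and let D_{n,σ} denote the set of Wheeler DFAs with states [n], effective alphabet [σ], any number of transitions, and Wheeler order 1 < ... < n. Then |D_{n,σ}| ≥ 2^{nσ - n + 1} · C(nσ-σ, n-1-σ), and hence log₂|D_{n,σ}| ≥ nσ + (n-σ)·log₂σ - (n + log₂σ). -/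
/-!
List the potential transitions `(u, a)` letter by letter, each block ordered by source state.
Pick a set `T` of positions to leave out and a set `L` of `n - 1` other positions, containing
the first position `(0, a)` of every block, and send the transition at position `p` to state
`#{x ∈ L | x ≤ p}`. Targets then grow along the order, which gives both Wheeler axioms; every
letter is used and every state `1, …, n - 1` is hit, and `(L, T)` can be read back from the
automaton. Counting the admissible pairs gives `C(nσ - σ, n - 1 - σ) · 2 ^ (nσ - n + 1)`, and
`C(m, k) ≥ s ^ k` for `s k ≤ m` turns this into the logarithmic bound.
-/

open Finset

section CountLE

variable {α : Type*} [LinearOrder α]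

def countLE (L : Finset α) (p : α) : ℕ := #{x ∈ L | x ≤ p}

lemma countLE_le_card (L : Finset α) (p : α) : countLE L p ≤ #L := card_filter_le _ _

lemma countLE_mono (L : Finset α) : Monotone (countLE L) := fun _ _ hpq =>
  card_le_card (monotone_filter_right L fun _ _ hx => hx.trans hpq)

lemma countLE_pos {L : Finset α} {p q : α} (hq : q ∈ L) (hqp : q ≤ p) : 0 < countLE L p :=
  card_pos.2 ⟨q, mem_filter.2 ⟨hq, hqp⟩⟩

lemma countLE_lt_countLE {L : Finset α} {p q r : α} (hq : q ∈ L) (hpq : p < q) (hqr : q ≤ r) :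
    countLE L p < countLE L r := by
  refine card_lt_card ((ssubset_iff_of_subset ?_).2 ⟨q, ?_, ?_⟩)
  · exact monotone_filter_right L fun _ _ hx => hx.trans (hpq.le.trans hqr)
  · exact mem_filter.2 ⟨hq, hqr⟩
  · simp [hpq]

lemma countLE_orderEmbOfFin (L : Finset α) {k : ℕ} (h : #L = k) (i : Fin k) :
    countLE L (L.orderEmbOfFin h i) = i + 1 := by
  have : {x ∈ L | x ≤ L.orderEmbOfFin h i} = (Iic i).map (L.orderEmbOfFin h).toEmbedding := by
    ext x
    simp only [mem_filter, mem_map, mem_Iic]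
    constructor
    · rintro ⟨hx, hxi⟩
      obtain ⟨j, rfl⟩ : x ∈ Set.range (L.orderEmbOfFin h) := by rwa [range_orderEmbOfFin]
      exact ⟨j, by simpa using hxi, rfl⟩
    · rintro ⟨j, hji, rfl⟩
      exact ⟨orderEmbOfFin_mem L h j, by simpa using hji⟩
  rw [countLE, this, card_map, Fin.card_Iic]

lemma exists_mem_countLE_eq {L : Finset α} {j : ℕ} (hj : 0 < j) (hjL : j ≤ #L) :
    ∃ p ∈ L, countLE L p = j := by
  refine ⟨L.orderEmbOfFin rfl ⟨j - 1, by omega⟩, orderEmbOfFin_mem L rfl _, ?_⟩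
  rw [countLE_orderEmbOfFin]
  exact Nat.sub_add_cancel hj

lemma countLE_lt_of_agree_below {L L' : Finset α} {p : α}
    (hbelow : ∀ x < p, x ∈ L ↔ x ∈ L') (hpL : p ∈ L) (hpL' : p ∉ L') :
    countLE L' p < countLE L p := by
  refine card_lt_card ((ssubset_iff_of_subset fun x hx => ?_).2 ⟨p, ?_, ?_⟩)
  · obtain ⟨hxL', hxp⟩ := mem_filter.1 hx
    have hxp : x < p := lt_of_le_of_ne hxp (by rintro rfl; exact hpL' hxL')
    exact mem_filter.2 ⟨(hbelow x hxp).2 hxL', hxp.le⟩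
  · exact mem_filter.2 ⟨hpL, le_rfl⟩
  · simp [hpL']

lemma eq_of_countLE_eq {L L' A : Finset α} (hL : L ⊆ A) (hL' : L' ⊆ A)
    (h : ∀ p ∈ A, countLE L p = countLE L' p) : L = L' := by
  by_contra hne
  have hD : (symmDiff L L').Nonempty := nonempty_iff_ne_empty.2 (symmDiff_eq_bot.not.2 hne)
  set p := (symmDiff L L').min' hD
  have hbelow : ∀ x < p, x ∈ L ↔ x ∈ L' := fun x hx => by
    by_contra hxD
    exact (min'_le _ x (mem_symmDiff.2 (by tauto))).not_gt hx
  rcases mem_symmDiff.1 ((symmDiff L L').min'_mem hD) with ⟨hpL, hpL'⟩ | ⟨hpL', hpL⟩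
  · exact (countLE_lt_of_agree_below hbelow hpL hpL').ne (h p (hL hpL)).symm
  · exact (countLE_lt_of_agree_below (fun x hx => (hbelow x hx).symm) hpL' hpL).ne
      (h p (hL' hpL'))

end CountLE

lemma pow_le_choose_of_mul_le {s k m : ℕ} (h : s * k ≤ m) : s ^ k ≤ m.choose k := by
  induction k generalizing m with
  | zero => simp
  | succ k ih =>
    rcases Nat.eq_zero_or_pos s with rfl | hs
    · simp
    obtain ⟨m, rfl⟩ :=
      Nat.exists_eq_add_one_of_ne_zero ((Nat.mul_pos hs k.succ_pos).trans_le h).ne'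
    rw [Nat.mul_succ] at h
    refine Nat.le_of_mul_le_mul_right ?_ k.succ_pos
    calc s ^ (k + 1) * (k + 1) = s * (k + 1) * s ^ k := by ring
      _ ≤ (m + 1) * m.choose k := Nat.mul_le_mul (by omega) (ih (by omega))
      _ = (m + 1).choose (k + 1) * (k + 1) := Nat.add_one_mul_choose_eq m k

lemma card_sigma_powersetCard_powerset_sdiff {α : Type*} [DecidableEq α] (F : Finset α)
    (k : ℕ) :
    #((F.powersetCard k).sigma fun S => (F \ S).powerset) = (#F).choose k * 2 ^ (#F - k) := by
  rw [card_sigma, sum_congr rfl fun S hS => ?_, sum_const, card_powersetCard, smul_eq_mul]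
  obtain ⟨hSF, hSk⟩ := mem_powersetCard.1 hS
  rw [card_powerset, card_sdiff_of_subset hSF, hSk]

lemma le_logb_of_two_pow_mul_pow_le {N e k s : ℕ} (hs : 0 < s) (h : 2 ^ e * s ^ k ≤ N) :
    e + k * Real.logb 2 s ≤ Real.logb 2 N := by
  have hpos : (0 : ℝ) < 2 ^ e * (s : ℝ) ^ k := by positivity
  calc (e : ℝ) + k * Real.logb 2 s = Real.logb 2 (2 ^ e * (s : ℝ) ^ k) := by
        rw [Real.logb_mul (by positivity) (by positivity), Real.logb_pow, Real.logb_pow,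
          Real.logb_self_eq_one one_lt_two, mul_one]
    _ ≤ Real.logb 2 N := Real.logb_le_logb_of_le one_lt_two hpos (by exact_mod_cast h)

def IsWheelerDFA {n σ : ℕ} (hn : 0 < n) (δ : Fin n → Fin σ → Option (Fin n)) : Prop :=
  (∀ a : Fin σ, ∃ u v : Fin n, δ u a = some v) ∧
  (∀ (u : Fin n) (a : Fin σ), δ u a ≠ some ⟨0, hn⟩) ∧
  (∀ v : Fin n, v ≠ ⟨0, hn⟩ → ∃ (u : Fin n) (a : Fin σ), δ u a = some v) ∧
  (∀ (u v u' v' : Fin n) (a a' : Fin σ),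
    δ u a = some u' → δ v a' = some v' → a < a' → u' < v') ∧
  (∀ (u v u' v' : Fin n) (a : Fin σ),
    δ u a = some u' → δ v a = some v' → u' ≠ v' → u < v → u' < v')

section StepDFA

variable {n σ : ℕ}

/-- Position `toLex (a, u)` stands for the transition out of `u` labelled `a`; `T` lists the
absent transitions and the target increases at the positions in `L`. -/
def stepDFA (L T : Finset (Fin σ ×ₗ Fin n)) (hL : #L < n) :
    Fin n → Fin σ → Option (Fin n) :=
  fun u a => if toLex (a, u) ∈ T then none
    else some ⟨countLE L (toLex (a, u)), (countLE_le_card L _).trans_lt hL⟩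

def blockStarts (hn : 0 < n) : Finset (Fin σ ×ₗ Fin n) :=
  univ.image fun a => toLex (a, ⟨0, hn⟩)

lemma toLex_mem_blockStarts (hn : 0 < n) (a : Fin σ) : toLex (a, ⟨0, hn⟩) ∈ blockStarts hn :=
  mem_image_of_mem _ (mem_univ a)

lemma card_blockStarts (hn : 0 < n) : #(blockStarts (σ := σ) hn) = σ := by
  rw [blockStarts, card_image_of_injective _ fun a b h => by simpa using h, card_univ,
    Fintype.card_fin]

variable {L T : Finset (Fin σ ×ₗ Fin n)} {hL : #L < n}

lemma stepDFA_eq_some_iff {u v : Fin n} {a : Fin σ} :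
    stepDFA L T hL u a = some v ↔
      toLex (a, u) ∉ T ∧ (v : ℕ) = countLE L (toLex (a, u)) := by
  unfold stepDFA
  split_ifs with h <;> simp [h, Fin.ext_iff, eq_comm]

lemma stepDFA_of_notMem {u : Fin n} {a : Fin σ} (h : toLex (a, u) ∉ T) :
    stepDFA L T hL u a = some ⟨countLE L (toLex (a, u)), (countLE_le_card L _).trans_lt hL⟩ :=
  if_neg h

lemma stepDFA_eq_none_iff {u : Fin n} {a : Fin σ} :
    stepDFA L T hL u a = none ↔ toLex (a, u) ∈ T := by
  unfold stepDFA
  split_ifs with h <;> simp [h]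

lemma isWheelerDFA_stepDFA (hn : 0 < n) (hB : blockStarts hn ⊆ L)
    (hcard : #L = n - 1) (hLT : Disjoint L T) : IsWheelerDFA hn (stepDFA L T hL) := by
  have hstarts a := hB (toLex_mem_blockStarts hn a)
  refine ⟨fun a => ?_, fun u a h => ?_, fun v hv => ?_, fun u v u' v' a a' hu hv haa' => ?_,
    fun u v u' v' a hu hv hne huv => ?_⟩
  · exact ⟨_, _, stepDFA_of_notMem (disjoint_left.1 hLT (hstarts a))⟩
  · have hpos := countLE_pos (p := toLex (a, u)) (hstarts a)
      (Prod.Lex.toLex_le_toLex.2 (.inr ⟨rfl, Nat.zero_le u⟩))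
    have hzero : 0 = countLE L _ := (stepDFA_eq_some_iff.1 h).2
    omega
  · obtain ⟨p, hpL, hp⟩ := exists_mem_countLE_eq (L := L) (j := v)
      (Nat.pos_of_ne_zero fun h => hv (Fin.ext h)) (by omega)
    obtain ⟨⟨a, u⟩, rfl⟩ := toLex.surjective p
    exact ⟨u, a, stepDFA_eq_some_iff.2 ⟨disjoint_left.1 hLT hpL, hp.symm⟩⟩
  · rw [stepDFA_eq_some_iff] at hu hv
    rw [Fin.lt_def, hu.2, hv.2]
    exact countLE_lt_countLE (hstarts a') (Prod.Lex.toLex_lt_toLex.2 (.inl haa'))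
      (Prod.Lex.toLex_le_toLex.2 (.inr ⟨rfl, Nat.zero_le v⟩))
  · rw [stepDFA_eq_some_iff] at hu hv
    refine lt_of_le_of_ne ?_ hne
    rw [Fin.le_def, hu.2, hv.2]
    exact countLE_mono L (Prod.Lex.toLex_le_toLex.2 (.inr ⟨rfl, huv.le⟩))

end StepDFA

section Counting

variable {n σ : ℕ}

lemma stepDFA_injective {L L' T T' : Finset (Fin σ ×ₗ Fin n)} {hL : #L < n} {hL' : #L' < n}
    (hLT : Disjoint L T) (hLT' : Disjoint L' T') (h : stepDFA L T hL = stepDFA L' T' hL') :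
    L = L' ∧ T = T' := by
  have hT : T = T' := by
    ext p
    obtain ⟨⟨a, u⟩, rfl⟩ := toLex.surjective p
    rw [← stepDFA_eq_none_iff (hL := hL), ← stepDFA_eq_none_iff (hL := hL'), h]
  subst hT
  refine ⟨eq_of_countLE_eq (subset_compl_iff_disjoint_right.2 hLT)
    (subset_compl_iff_disjoint_right.2 hLT') fun p hp => ?_, rfl⟩
  obtain ⟨⟨a, u⟩, rfl⟩ := toLex.surjective p
  have hstep := congrFun (congrFun h u) a
  rw [stepDFA_of_notMem (mem_compl.1 hp), stepDFA_of_notMem (mem_compl.1 hp)] at hstep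
  simpa using hstep

lemma two_pow_mul_choose_le_card_isWheelerDFA (hn : 0 < n) (hσ : 0 < σ) (hσn : σ ≤ n - 1) :
    2 ^ (n * σ - n + 1) * (n * σ - σ).choose (n - 1 - σ) ≤
      Nat.card {δ : Fin n → Fin σ → Option (Fin n) // IsWheelerDFA hn δ} := by
  set B := blockStarts (σ := σ) hn
  have hF : #Bᶜ = n * σ - σ := by
    rw [card_compl, Fintype.card_lex, Fintype.card_prod, Fintype.card_fin, Fintype.card_fin,
      card_blockStarts, mul_comm]
  set D := (Bᶜ.powersetCard (n - 1 - σ)).sigma fun S => (Bᶜ \ S).powerset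
  have hD : #D = 2 ^ (n * σ - n + 1) * (n * σ - σ).choose (n - 1 - σ) := by
    have := Nat.le_mul_of_pos_right n hσ
    rw [card_sigma_powersetCard_powerset_sdiff, hF, mul_comm]
    congr 2
    omega
  have hmem : ∀ x ∈ D,
      #(B ∪ x.1) = n - 1 ∧ Disjoint B x.1 ∧ Disjoint (B ∪ x.1) x.2 := by
    intro x hx
    obtain ⟨hS, hT⟩ := mem_sigma.1 hx
    obtain ⟨hSB, hScard⟩ := mem_powersetCard.1 hS
    have hBS : Disjoint B x.1 := disjoint_of_subset_right hSB disjoint_compl_right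
    refine ⟨by rw [card_union_of_disjoint hBS, card_blockStarts, hScard]; omega, hBS, ?_⟩
    obtain ⟨hTB, hTS⟩ := subset_sdiff.1 (mem_powerset.1 hT)
    exact disjoint_union_left.2 ⟨(subset_compl_iff_disjoint_right.1 hTB).symm, hTS.symm⟩
  rw [← hD, ← Nat.card_eq_finsetCard]
  refine Nat.card_le_card_of_injective (fun x =>
    ⟨stepDFA (B ∪ x.1.1) x.1.2 (by rw [(hmem x x.2).1]; omega),
      isWheelerDFA_stepDFA hn subset_union_left (hmem x x.2).1 (hmem x x.2).2.2⟩) ?_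
  rintro ⟨⟨S, T⟩, hx⟩ ⟨⟨S', T'⟩, hx'⟩ h
  have hδ := congrArg Subtype.val h
  dsimp only at hδ
  obtain ⟨hLL, rfl⟩ := stepDFA_injective (hmem _ hx).2.2 (hmem _ hx').2.2 hδ
  have hSS : S = S' := calc
    S = (B ∪ S) \ B := (union_sdiff_cancel_left (hmem _ hx).2.1).symm
    _ = (B ∪ S') \ B := by rw [hLL]
    _ = S' := union_sdiff_cancel_left (hmem _ hx').2.1
  subst hSS
  rfl

end Counting

/-- The number of Wheeler DFAs with states `Fin n` (source = 0, Wheeler order = integer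
order), effective alphabet `Fin σ`, and any number of transitions. -/
theorem stmt_11 (n σ : ℕ) (hn : 0 < n) (hσ : 0 < σ) (hσn : σ ≤ n - 1) :
    ((Nat.card {δ : Fin n → Fin σ → Option (Fin n) //
        -- effective alphabet: every letter labels a transition
        (∀ a : Fin σ, ∃ u v : Fin n, δ u a = some v) ∧
        -- the source has no incoming transitions
        (∀ (u : Fin n) (a : Fin σ), δ u a ≠ some ⟨0, hn⟩) ∧
        -- every non-source state has an incoming transition
        (∀ v : Fin n, v ≠ ⟨0, hn⟩ → ∃ (u : Fin n) (a : Fin σ), δ u a = some v) ∧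
        -- Wheeler axiom (i)
        (∀ (u v u' v' : Fin n) (a a' : Fin σ),
          δ u a = some u' → δ v a' = some v' → a < a' → u' < v') ∧
        -- Wheeler axiom (ii)
        (∀ (u v u' v' : Fin n) (a : Fin σ),
          δ u a = some u' → δ v a = some v' → u' ≠ v' → u < v → u' < v')} : ℝ) ≥
      2 ^ (n * σ - n + 1) * ((n * σ - σ).choose (n - 1 - σ) : ℝ)) ∧
    Real.logb 2 (Nat.card {δ : Fin n → Fin σ → Option (Fin n) //
        (∀ a : Fin σ, ∃ u v : Fin n, δ u a = some v) ∧
        (∀ (u : Fin n) (a : Fin σ), δ u a ≠ some ⟨0, hn⟩) ∧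
        (∀ v : Fin n, v ≠ ⟨0, hn⟩ → ∃ (u : Fin n) (a : Fin σ), δ u a = some v) ∧
        (∀ (u v u' v' : Fin n) (a a' : Fin σ),
          δ u a = some u' → δ v a' = some v' → a < a' → u' < v') ∧
        (∀ (u v u' v' : Fin n) (a : Fin σ),
          δ u a = some u' → δ v a = some v' → u' ≠ v' → u < v → u' < v')} : ℝ) ≥
      (n : ℝ) * σ + ((n : ℝ) - σ) * Real.logb 2 σ - ((n : ℝ) + Real.logb 2 σ) := by
  change (Nat.card {δ // IsWheelerDFA hn δ} : ℝ) ≥ _ ∧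
    Real.logb 2 (Nat.card {δ // IsWheelerDFA hn δ}) ≥ _
  have hcount := two_pow_mul_choose_le_card_isWheelerDFA hn hσ hσn
  have hchoose : σ ^ (n - 1 - σ) ≤ (n * σ - σ).choose (n - 1 - σ) := by
    refine pow_le_choose_of_mul_le ?_
    calc σ * (n - 1 - σ) ≤ σ * (n - 1) := Nat.mul_le_mul_left _ (Nat.sub_le _ _)
      _ = n * σ - σ := by rw [Nat.mul_comm, Nat.sub_one_mul]
  have hlog := le_logb_of_two_pow_mul_pow_le hσ ((Nat.mul_le_mul_left _ hchoose).trans hcount)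
  refine ⟨by exact_mod_cast hcount, ?_⟩
  push_cast [Nat.cast_sub (Nat.le_mul_of_pos_right n hσ), Nat.cast_sub hσn, Nat.cast_sub hn]
    at hlog
  linarith
end

section
/- Let n, σ be positive integers with σ ≤ n-1. Then ∑_{m=n-1}^{nσ} C(m-σ, n-σ-1) · ∑_{j=0}^{σ} (-1)^j C(σ,j) C(n(σ-j), m) ≤ C(nσ-σ, n-σ-1) · 2^{nσ}. -/
open Polynomial Finset

-- r : ℕ[X], 1 + r = (1+X)^n
noncomputable def rr (n : ℕ) : Polynomial ℕ := ∑ k ∈ Finset.Ioc 0 n, Polynomial.C (n.choose k) * Polynomial.X ^ k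

lemma one_add_rr (n : ℕ) : (1 : Polynomial ℕ) + rr n = (1 + X) ^ n := by
  ext m
  rw [coeff_one_add_X_pow]
  rcases Nat.eq_zero_or_pos m with hm | hm
  · subst hm
    simp [rr, finset_sum_coeff, coeff_C_mul, coeff_X_pow]
  · rw [coeff_add, coeff_one, if_neg (by omega), zero_add]
    simp only [rr, finset_sum_coeff, coeff_C_mul, coeff_X_pow, mul_ite, mul_one, mul_zero]
    rw [Finset.sum_ite_eq (Finset.Ioc 0 n) m (fun k => n.choose k)]
    by_cases h : m ∈ Finset.Ioc 0 n
    · simp [h]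
    · rw [if_neg h, Nat.choose_eq_zero_of_lt (by simp [Finset.mem_Ioc] at h; omega)]
      simp

lemma map_rr (n : ℕ) : (rr n).map (Nat.castRingHom ℤ) =
    ((1 : Polynomial ℤ) + X) ^ n - 1 := by
  have h := congrArg (Polynomial.map (Nat.castRingHom ℤ)) (one_add_rr n)
  simp only [Polynomial.map_add, Polynomial.map_one, Polynomial.map_pow, Polynomial.map_X] at h
  linear_combination h

lemma coeff_formula (n σ m : ℕ) : (((rr n ^ σ).coeff m : ℕ) : ℤ) =
    ∑ j ∈ Finset.range (σ + 1),
      (-1 : ℤ) ^ j * (σ.choose j) * ((n * (σ - j)).choose m) := by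
  have h1 : (((rr n ^ σ).coeff m : ℕ) : ℤ) = ((rr n ^ σ).map (Nat.castRingHom ℤ)).coeff m := by
    rw [coeff_map]; rfl
  rw [h1, Polynomial.map_pow, map_rr, sub_pow]
  rw [finset_sum_coeff]
  rw [← Finset.sum_range_reflect]
  apply Finset.sum_congr rfl
  intro j hj
  simp only [Finset.mem_range] at hj
  have hj' : j ≤ σ := by omega
  have h2 : σ + 1 - 1 - j = σ - j := by omega
  rw [h2, one_pow, mul_one, ← pow_mul]
  have h3 : ((-1 : Polynomial ℤ) ^ (σ - j + σ) * (1 + X) ^ (n * (σ - j)) *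
      ((σ.choose (σ - j) : ℕ) : Polynomial ℤ)).coeff m
      = (-1 : ℤ) ^ (σ - j + σ) * ((n * (σ - j)).choose m) * (σ.choose (σ - j)) := by
    rw [← Polynomial.C_eq_natCast, Polynomial.coeff_mul_C]
    have : ((-1 : Polynomial ℤ) ^ (σ - j + σ)) = Polynomial.C ((-1 : ℤ) ^ (σ - j + σ)) := by
      simp
    rw [this, Polynomial.coeff_C_mul, coeff_one_add_X_pow]
  rw [h3, Nat.choose_symm hj']
  have h4 : (-1 : ℤ) ^ (σ - j + σ) = (-1 : ℤ) ^ j := by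
    have : σ - j + σ = j + 2 * (σ - j) := by omega
    rw [this, pow_add, pow_mul]
    simp
  rw [h4]; ring

lemma natDegree_rr (n : ℕ) : (rr n).natDegree ≤ n := by
  rw [Polynomial.natDegree_le_iff_coeff_eq_zero]
  intro N hN
  have h := congrArg (fun p => Polynomial.coeff p N) (one_add_rr n)
  simp only [coeff_add, coeff_one_add_X_pow, coeff_one, if_neg (by omega : ¬ N = 0),
    zero_add] at h
  rw [h, Nat.choose_eq_zero_of_lt hN]; rfl

lemma eval_rr (n : ℕ) : (rr n).eval 1 ≤ 2 ^ n := by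
  have h := congrArg (Polynomial.eval 1) (one_add_rr n)
  simp only [eval_add, eval_one, eval_pow, eval_X] at h
  norm_num at h
  omega

lemma coeff_sum_le (n σ : ℕ) :
    ∑ m ∈ Finset.Icc (n - 1) (n * σ), (rr n ^ σ).coeff m ≤ 2 ^ (n * σ) := by
  have hdeg : (rr n ^ σ).natDegree < n * σ + 1 := by
    have h1 : (rr n ^ σ).natDegree ≤ σ * n := by
      calc (rr n ^ σ).natDegree ≤ σ * (rr n).natDegree := Polynomial.natDegree_pow_le
        _ ≤ σ * n := Nat.mul_le_mul_left σ (natDegree_rr n)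
    have h2 : σ * n = n * σ := Nat.mul_comm σ n
    omega
  calc ∑ m ∈ Finset.Icc (n - 1) (n * σ), (rr n ^ σ).coeff m
      ≤ ∑ m ∈ Finset.range (n * σ + 1), (rr n ^ σ).coeff m := by
        apply Finset.sum_le_sum_of_subset
        intro x hx
        simp only [Finset.mem_Icc, Finset.mem_range] at *
        omega
    _ = (rr n ^ σ).eval 1 := by
        rw [Polynomial.eval_eq_sum_range' hdeg]
        simp
    _ ≤ 2 ^ (n * σ) := by
        rw [Polynomial.eval_pow, pow_mul]
        exact Nat.pow_le_pow_left (eval_rr n) σ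

theorem stmt_18 (n σ : ℕ) (hn : 0 < n) (hσ : 0 < σ) (hσn : σ ≤ n - 1) :
    ∑ m ∈ Finset.Icc (n - 1) (n * σ),
        ((m - σ).choose (n - σ - 1) : ℤ) *
          ∑ j ∈ Finset.range (σ + 1),
            (-1 : ℤ) ^ j * (σ.choose j) * ((n * (σ - j)).choose m) ≤
      ((n * σ - σ).choose (n - σ - 1) : ℤ) * 2 ^ (n * σ) := by
  calc ∑ m ∈ Finset.Icc (n - 1) (n * σ),
        ((m - σ).choose (n - σ - 1) : ℤ) *
          ∑ j ∈ Finset.range (σ + 1),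
            (-1 : ℤ) ^ j * (σ.choose j) * ((n * (σ - j)).choose m)
      = ∑ m ∈ Finset.Icc (n - 1) (n * σ),
          ((m - σ).choose (n - σ - 1) : ℤ) * (((rr n ^ σ).coeff m : ℕ) : ℤ) := by
        apply Finset.sum_congr rfl
        intro m _
        rw [coeff_formula]
    _ ≤ ∑ m ∈ Finset.Icc (n - 1) (n * σ),
          ((n * σ - σ).choose (n - σ - 1) : ℤ) * (((rr n ^ σ).coeff m : ℕ) : ℤ) := by
        apply Finset.sum_le_sum
        intro m hm
        simp only [Finset.mem_Icc] at hm
        apply mul_le_mul_of_nonneg_right _ (Int.natCast_nonneg _)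
        exact_mod_cast Nat.choose_le_choose (n - σ - 1) (Nat.sub_le_sub_right hm.2 σ)
    _ = ((n * σ - σ).choose (n - σ - 1) : ℤ) *
          ((∑ m ∈ Finset.Icc (n - 1) (n * σ), (rr n ^ σ).coeff m : ℕ) : ℤ) := by
        rw [← Finset.mul_sum]
        push_cast
        ring
    _ ≤ ((n * σ - σ).choose (n - σ - 1) : ℤ) * 2 ^ (n * σ) := by
        apply mul_le_mul_of_nonneg_left _ (Int.natCast_nonneg _)
        exact_mod_cast coeff_sum_le n σ
end
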